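/- Let I be an instance of 3DM with elements A ∪ B ∪ C = {e_1,…,e_{3n̂}} and family S = {S_1,…,S_{3n̂}}. Construct the capacitated house allocation instance I' as follows: for each element e_i there is a house e_i of capacity 1 and an applicant e_i' with preference list consisting of e_i only; for each set S_j = {e_{j_1}, e_{j_2}, e_{j_3}} (j_1 < j_2 < j_3) there are houses t_j of capacity 4, p_j of capacity 2, q_j of capacity 1, and applicants s_j^1, s_j^2, s_j^3, s_j^4, a_j, p_j', q_j^1, q_j^2 with preference lists s_j^ℓ : e_{j_ℓ} ≻ p_j ≻ t_j for ℓ = 1,2,3; s_j^4 : e_{j_3} ≻ p_j ≻ t_j; a_j : q_j ≻ p_j ≻ x; q_j^1, q_j^2 : q_j only; p_j' : p_j only; and there is a collector house x of capacity 2n̂ − 1. Then there is a capacity change vector r with |r|_∞ ≤ 1 such that the instance with capacities q + r admits a perfect popular matching if and only if I admits an exact 3-cover. -/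

import Mathlib

noncomputable section

open Finset

attribute [local instance] Classical.propDecidable

/-- `Better l x y` means the (optional) house `x` is strictly preferred to the (optional)
house `y` according to the strict preference list `l` (earlier in the list = more
preferred); being matched to any acceptable house is preferred to being unmatched. -/
def Better {H : Type*} (l : List H) : Option H → Option H → Prop
  | some h, some h' => h ∈ l ∧ l.idxOf h < l.idxOf h'
  | some h, none => h ∈ l
  | none, _ => False

/-- A capacitated house allocation instance: each applicant `a` has a strict preference
list `pref a` over her acceptable houses (most preferred first, acceptable = on the list),
and each house `h` has a capacity `cap h`. -/
structure HA (A H : Type*) where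
  pref : A → List H
  cap : H → ℕ

namespace HA

variable {A H : Type*} [Fintype A]

/-- A matching assigns to each applicant at most one acceptable house,
respecting the houses' capacities. -/
def IsMatching (I : HA A H) (M : A → Option H) : Prop :=
  (∀ a h, M a = some h → h ∈ I.pref a) ∧
  ∀ h, (univ.filter fun a => M a = some h).card ≤ I.cap h

/-- A matching is perfect if every applicant is matched. -/
def Perfect (M : A → Option H) : Prop := ∀ a, (M a).isSome

/-- `M'` dominates `M` if strictly more applicants prefer `M'` to `M` than
prefer `M` to `M'`. -/
def Dominates (I : HA A H) (M' M : A → Option H) : Prop :=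
  (univ.filter fun a => Better (I.pref a) (M a) (M' a)).card <
    (univ.filter fun a => Better (I.pref a) (M' a) (M a)).card

/-- A matching is popular if no matching dominates it. -/
def Popular (I : HA A H) (M : A → Option H) : Prop :=
  I.IsMatching M ∧ ∀ M', I.IsMatching M' → ¬ I.Dominates M' M

/-- `M'` Pareto-dominates `M` if every applicant is at least as well off in `M'`,
and some applicant is strictly better off. -/
def ParetoDominates (I : HA A H) (M' M : A → Option H) : Prop :=
  (∀ a, M' a = M a ∨ Better (I.pref a) (M' a) (M a)) ∧
  ∃ a, Better (I.pref a) (M' a) (M a)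

/-- A matching is Pareto-optimal if no matching Pareto-dominates it. -/
def ParetoOptimal (I : HA A H) (M : A → Option H) : Prop :=
  I.IsMatching M ∧ ∀ M', I.IsMatching M' → ¬ I.ParetoDominates M' M

/-- The cardinality of a matching: the number of matched applicants. -/
def size (M : A → Option H) : ℕ := (univ.filter fun a => (M a).isSome).card

/-- `f(a)`: the most preferred acceptable house of `a` (if any). -/
def fOpt (I : HA A H) (a : A) : Option H := (I.pref a).head?

/-- The admirers of a house `h`: the applicants whose most preferred house is `h`. -/
def admirers (I : HA A H) (h : H) : Finset A := univ.filter fun a => I.fOpt a = some h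

/-- `s(a)`: equals `f(a)` if `f(a)` has at most `cap (f a)` admirers; otherwise the
most preferred acceptable house of `a` having strictly fewer admirers than its
capacity; `none` if no such house exists. -/
def sOpt (I : HA A H) (a : A) : Option H :=
  match (I.pref a).head? with
  | none => none
  | some h =>
    if (I.admirers h).card ≤ I.cap h then some h
    else (I.pref a).find? fun h' => decide ((I.admirers h').card < I.cap h')

/-- `(a, h)` is an edge of the first/second-choice multigraph `G'`. -/
def InG' (I : HA A H) (a : A) (h : H) : Prop := I.fOpt a = some h ∨ I.sOpt a = some h

/-- The set of applicants matched to house `h` in `M`. -/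
def matchedTo (M : A → Option H) (h : H) : Finset A := univ.filter fun a => M a = some h

/-- An admissible matching: every edge lies in `G'`; every house having at least as many
admirers as its capacity is saturated by admirers only; and every house having at most
as many admirers as its capacity has all its admirers matched to it. -/
def Admissible (I : HA A H) (M : A → Option H) : Prop :=
  I.IsMatching M ∧
  (∀ a h, M a = some h → I.InG' a h) ∧
  (∀ h, I.cap h ≤ (I.admirers h).card →
      (matchedTo M h).card = I.cap h ∧ ∀ a ∈ matchedTo M h, I.fOpt a = some h) ∧
  (∀ h, (I.admirers h).card ≤ I.cap h → ∀ a ∈ I.admirers h, M a = some h)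

end HA

/-- An instance of the special variant of 3DM used in the reductions: the elements are
`e_0, …, e_{3n̂-1} : Fin (3 * n̂)`, where the first `n̂` elements form the class `A`, the
next `n̂` form `B` and the last `n̂` form `C`; `S j = (j₁, j₂, j₃)` (with `j₁ < j₂ < j₃`,
one element from each class) is the `j`-th 3-set of the family, and every element lies
in exactly 3 members of the family. -/
structure ThreeDMFlat (n : ℕ) where
  S : Fin (3 * n) → Fin (3 * n) × Fin (3 * n) × Fin (3 * n)
  partA : ∀ j, ((S j).1 : ℕ) < n
  partB : ∀ j, n ≤ ((S j).2.1 : ℕ) ∧ ((S j).2.1 : ℕ) < 2 * n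
  partC : ∀ j, 2 * n ≤ ((S j).2.2 : ℕ)
  reg : ∀ i, (Finset.univ.filter fun j =>
    (S j).1 = i ∨ (S j).2.1 = i ∨ (S j).2.2 = i).card = 3

/-- Membership of element `i` in the set `S j`. -/
def ThreeDMFlat.Mem {n : ℕ} (D : ThreeDMFlat n) (i j : Fin (3 * n)) : Prop :=
  (D.S j).1 = i ∨ (D.S j).2.1 = i ∨ (D.S j).2.2 = i

/-- `J` is an exact 3-cover: every element lies in exactly one member of `J`. -/
def ThreeDMFlat.ExactCover {n : ℕ} (D : ThreeDMFlat n) (J : Finset (Fin (3 * n))) : Prop :=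
  ∀ i, (J.filter fun j => D.Mem i j).card = 1

/-- Houses of the reduction for STATEMENT 14: element houses `e_i`, houses `t_j`, `p_j`,
`q_j` for each set `S_j`, and the collector house `x`. -/
abbrev House14 (n : ℕ) :=
  Fin (3 * n) ⊕ (Fin (3 * n) ⊕ (Fin (3 * n) ⊕ (Fin (3 * n) ⊕ Unit)))

/-- Applicants of the reduction for STATEMENT 14: `e_i'`, `s_j^ℓ` (ℓ = 1,2,3,4), `a_j`,
`p_j'` and `q_j^1, q_j^2`. -/
abbrev Appl14 (n : ℕ) :=
  Fin (3 * n) ⊕ ((Fin (3 * n) × Fin 4) ⊕ (Fin (3 * n) ⊕ (Fin (3 * n) ⊕ (Fin (3 * n) × Fin 2))))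

def he14 {n : ℕ} (i : Fin (3 * n)) : House14 n := Sum.inl i
def ht14 {n : ℕ} (j : Fin (3 * n)) : House14 n := Sum.inr (Sum.inl j)
def hp14 {n : ℕ} (j : Fin (3 * n)) : House14 n := Sum.inr (Sum.inr (Sum.inl j))
def hq14 {n : ℕ} (j : Fin (3 * n)) : House14 n := Sum.inr (Sum.inr (Sum.inr (Sum.inl j)))
def hx14 {n : ℕ} : House14 n := Sum.inr (Sum.inr (Sum.inr (Sum.inr ())))

/-- The element of `S_j` acceptable to `s_j^ℓ`: `e_{j_1}, e_{j_2}, e_{j_3}` for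
`ℓ = 0, 1, 2` and `e_{j_3}` for `ℓ = 3`. -/
def elem14 {n : ℕ} (D : ThreeDMFlat n) (j : Fin (3 * n)) (ℓ : Fin 4) : Fin (3 * n) :=
  if ℓ = 0 then (D.S j).1 else if ℓ = 1 then (D.S j).2.1 else (D.S j).2.2

/-- Initial capacities: `q[e_i] = 1`, `q[t_j] = 4`, `q[p_j] = 2`, `q[q_j] = 1`,
`q[x] = 2n̂ - 1`. -/
def cap14 {n : ℕ} : House14 n → ℕ
  | Sum.inl _ => 1
  | Sum.inr (Sum.inl _) => 4
  | Sum.inr (Sum.inr (Sum.inl _)) => 2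
  | Sum.inr (Sum.inr (Sum.inr (Sum.inl _))) => 1
  | Sum.inr (Sum.inr (Sum.inr (Sum.inr _))) => 2 * n - 1

/-- The instance `I'` of STATEMENT 14 (with capacity vector `c`):
`s_j^ℓ : e_{j_ℓ} ≻ p_j ≻ t_j` (ℓ = 1,2,3), `s_j^4 : e_{j_3} ≻ p_j ≻ t_j`;
`a_j : q_j ≻ p_j ≻ x`; `q_j^1, q_j^2 : q_j`; `p_j' : p_j`; `e_i' : e_i`. -/
def inst14 {n : ℕ} (D : ThreeDMFlat n) (c : House14 n → ℕ) : HA (Appl14 n) (House14 n) where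
  pref := fun a =>
    match a with
    | Sum.inl i => [he14 i]
    | Sum.inr (Sum.inl (j, ℓ)) => [he14 (elem14 D j ℓ), hp14 j, ht14 j]
    | Sum.inr (Sum.inr (Sum.inl j)) => [hq14 j, hp14 j, hx14]
    | Sum.inr (Sum.inr (Sum.inr (Sum.inl j))) => [hp14 j]
    | Sum.inr (Sum.inr (Sum.inr (Sum.inr (j, _)))) => [hq14 j]
  cap := c

/-!
Given an exact cover `J`, raise the capacities of the houses `e_i`, `q_j` and `x` by one, and
that of `p_j` by one or lower it by one according as `S_j ∈ J` or not. Let the `s`-applicants of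
a set in `J` take its elements and `p_j` (for `s_j^4`), those of the other sets take `t_j`, and
let `a_j` take `p_j` or `x` accordingly. Every applicant then holds her first choice or her
`s`-house, and every oversubscribed house is filled by admirers, so the matching is popular.

Conversely, in a perfect popular matching with `|r|_∞ ≤ 1` the applicants `q_j^1, q_j^2` fill
`q_j` (capacity at most 2), so each `a_j` holds `p_j` or `x`, and `x` has room for at most `2n̂`
of them: at least `n̂` sets have `a_j` at `p_j`. For such a set no `s_j^ℓ` can be at `t_j`
(promoting `a_j` to `q_j` and `s_j^ℓ` to `p_j` at the expense of `q_j^1` would win a vote),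
`p_j` has room for only one `s_j^ℓ`, and `e_i` for only one `s`-applicant; so the `s`-applicants
of `S_j` occupy all three elements of `S_j`, and these sets are pairwise disjoint. `n̂` disjoint
triples cover all `3n̂` elements.
-/

namespace Better

variable {H : Type*} {l : List H} {x z : H} {o o' : Option H}

lemma irrefl (l : List H) (o : Option H) : ¬ Better l o o := by
  cases o <;> simp [Better]

lemma asymm (h : Better l o o') : ¬ Better l o' o := by
  cases o <;> cases o' <;> simp_all [Better]
  omega

lemma cons_self {t : List H} (hacc : ∀ y, o = some y → y ∈ x :: t) (ho : o ≠ some x) :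
    Better (x :: t) (some x) o := by
  cases o with
  | none => exact List.mem_cons_self
  | some y =>
    refine ⟨List.mem_cons_self, ?_⟩
    rw [List.idxOf_cons_self, List.idxOf_cons_ne _ fun h => ho (by rw [h])]
    exact Nat.succ_pos _

lemma cons {t : List H} (hzx : z ≠ x) (hzo : o ≠ some z) (h : Better t (some x) o) :
    Better (z :: t) (some x) o := by
  cases o with
  | none => exact List.mem_cons_of_mem _ h
  | some y =>
    refine ⟨List.mem_cons_of_mem _ h.1, ?_⟩
    rw [List.idxOf_cons_ne _ hzx, List.idxOf_cons_ne _ fun e => hzo (by rw [e])]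
    exact Nat.succ_lt_succ h.2

lemma exists_eq_some (h : Better l o o') : ∃ x, o = some x := by
  cases o with
  | none => exact absurd h id
  | some x => exact ⟨x, rfl⟩

lemma not_cons_self {t : List H} : ¬ Better (x :: t) o (some x) := by
  cases o with
  | none => simp [Better]
  | some y =>
    rintro ⟨-, hlt⟩
    rw [List.idxOf_cons_self] at hlt
    omega

end Better

lemma List.find?_eq_false_of_idxOf_lt {α : Type*} [BEq α] [LawfulBEq α] {p : α → Bool}
    {l : List α} {a b : α} (hb : l.find? p = some b) (ha : a ∈ l)
    (hlt : l.idxOf a < l.idxOf b) : p a = false := by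
  obtain ⟨-, as, bs, rfl, has⟩ := List.find?_eq_some_iff_append.1 hb
  grind

namespace HA

variable {A H : Type*} {I : HA A H} {M M' : A → Option H} {a : A} {h : H} {o : Option H}

lemma not_better_fOpt : ¬ Better (I.pref a) o (I.fOpt a) := by
  rw [fOpt]
  cases hpref : I.pref a with
  | nil => cases o <;> simp [Better]
  | cons h t => exact Better.not_cons_self

lemma better_fOpt (hf : I.fOpt a = some h) (hacc : ∀ h', o = some h' → h' ∈ I.pref a)
    (ho : o ≠ some h) : Better (I.pref a) (some h) o := by
  rw [fOpt] at hf
  cases hpref : I.pref a with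
  | nil => simp [hpref] at hf
  | cons h₁ t =>
    obtain rfl : h₁ = h := by simpa [hpref] using hf
    exact Better.cons_self (hpref ▸ hacc) ho

variable [Fintype A]

@[simp]
lemma mem_matchedTo : a ∈ matchedTo M h ↔ M a = some h := by simp [matchedTo]

@[simp]
lemma mem_admirers : a ∈ I.admirers h ↔ I.fOpt a = some h := by simp [admirers]

lemma disjoint_matchedTo {h' : H} (hne : h ≠ h') :
    Disjoint (matchedTo M h) (matchedTo M h') := by
  rw [Finset.disjoint_left]
  intro a ha ha'
  simp_all

lemma IsMatching.card_le_cap (hM : I.IsMatching M) {s : Finset A}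
    (hs : ∀ a ∈ s, M a = some h) : s.card ≤ I.cap h :=
  (card_le_card fun a ha => mem_matchedTo.2 (hs a ha)).trans (hM.2 h)

lemma IsMatching.exists_mem_pref (hM : I.IsMatching M) (hperf : Perfect M) (a : A) :
    ∃ h ∈ I.pref a, M a = some h := by
  obtain ⟨h, hh⟩ := Option.isSome_iff_exists.mp (hperf a)
  exact ⟨h, hM.1 a h hh, hh⟩

lemma IsMatching.eq_of_pref_eq_singleton (hM : I.IsMatching M) (hperf : Perfect M)
    (ha : I.pref a = [h]) : M a = some h := by
  obtain ⟨h', hh', e⟩ := hM.exists_mem_pref hperf a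
  rw [ha, List.mem_singleton] at hh'
  rw [e, hh']

lemma IsMatching.of_injective (hM : I.IsMatching M) {σ : A → A} (hσ : σ.Injective)
    (hM' : ∀ a h, M' a = some h → h ∈ I.pref a ∧ M (σ a) = some h) : I.IsMatching M' := by
  refine ⟨fun a h e => (hM' a h e).1, fun h => le_trans ?_ (hM.2 h)⟩
  exact card_le_card_of_injOn σ (fun a ha => by simp_all) hσ.injOn

/-- Either `s(a) = f(a)`, or `s(a)` is the first house on the list of `a` with spare capacity
(and if there is none, no house on the list has any). -/
lemma cap_le_card_admirers_of_better_sOpt (hb : Better (I.pref a) (some h) (I.sOpt a)) :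
    I.cap h ≤ (I.admirers h).card := by
  rw [sOpt] at hb
  cases hpref : I.pref a with
  | nil => simp [hpref, Better] at hb
  | cons h₁ t =>
    simp only [hpref, List.head?_cons] at hb
    split_ifs at hb with hh₁
    · exact absurd hb Better.not_cons_self
    · cases hfind : (h₁ :: t).find? fun h' => decide ((I.admirers h').card < I.cap h') with
      | none =>
        rw [hfind] at hb
        simpa using List.find?_eq_none.1 hfind h hb
      | some b =>
        rw [hfind] at hb
        simpa using List.find?_eq_false_of_idxOf_lt hfind hb.1 hb.2

lemma cap_le_card_admirers_of_better (hfs : M a = I.fOpt a ∨ M a = I.sOpt a)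
    (hb : Better (I.pref a) (some h) (M a)) : I.cap h ≤ (I.admirers h).card := by
  rcases hfs with hf | hs
  · exact absurd (hf ▸ hb) not_better_fOpt
  · exact cap_le_card_admirers_of_better_sOpt (hs ▸ hb)

/-- An applicant who improves must enter an oversubscribed house, which is full of its
admirers; so each improvement displaces an admirer from her first choice. -/
theorem popular_of_fOpt_or_sOpt (hM : I.IsMatching M)
    (hfs : ∀ a, M a = I.fOpt a ∨ M a = I.sOpt a)
    (hfull : ∀ h, I.cap h ≤ (I.admirers h).card →
      I.cap h ≤ (matchedTo M h).card ∧ ∀ a ∈ matchedTo M h, I.fOpt a = some h) :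
    I.Popular M := by
  refine ⟨hM, fun M' hM' hdom => hdom.not_ge ?_⟩
  set P := univ.filter fun a => Better (I.pref a) (M' a) (M a)
  set K := P.biUnion fun a => (M' a).toFinset
  have hK : ∀ h ∈ K, I.cap h ≤ (I.admirers h).card := by
    intro h hh
    obtain ⟨a, ha, hah⟩ := mem_biUnion.1 hh
    rw [Option.mem_toFinset, Option.mem_def] at hah
    exact cap_le_card_admirers_of_better (hfs a) (hah ▸ (mem_filter.1 ha).2)
  have hP : P ⊆ K.biUnion fun h => matchedTo M' h \ matchedTo M h := by
    intro a ha
    obtain ⟨h, hh⟩ := (mem_filter.1 ha).2.exists_eq_some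
    refine mem_biUnion.2 ⟨h, mem_biUnion.2 ⟨a, ha, by simp [hh]⟩, ?_⟩
    have hb := (mem_filter.1 ha).2
    rw [hh] at hb
    simp only [mem_sdiff, mem_matchedTo]
    exact ⟨hh, fun e => Better.irrefl _ _ (e ▸ hb)⟩
  have hQ : (K.biUnion fun h => matchedTo M h \ matchedTo M' h) ⊆
      univ.filter fun a => Better (I.pref a) (M a) (M' a) := by
    intro a ha
    obtain ⟨h, hh, ha⟩ := mem_biUnion.1 ha
    obtain ⟨haM, haM'⟩ := mem_sdiff.1 ha
    rw [mem_matchedTo] at haM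
    rw [mem_filter, haM]
    exact ⟨mem_univ a, better_fOpt ((hfull h (hK h hh)).2 a (mem_matchedTo.2 haM))
      (hM'.1 a) (mt mem_matchedTo.2 haM')⟩
  calc P.card
      ≤ ∑ h ∈ K, (matchedTo M' h \ matchedTo M h).card :=
        (card_le_card hP).trans card_biUnion_le
    _ ≤ ∑ h ∈ K, (matchedTo M h \ matchedTo M' h).card :=
        sum_le_sum fun h hh =>
          card_sdiff_le_card_sdiff_iff.2 ((hM'.2 h).trans (hfull h (hK h hh)).1)
    _ = (K.biUnion fun h => matchedTo M h \ matchedTo M' h).card :=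
        (card_biUnion fun x _ y _ hxy =>
          (disjoint_matchedTo hxy).mono sdiff_subset sdiff_subset).symm
    _ ≤ _ := card_le_card hQ

end HA

namespace ThreeDMFlat

variable {n : ℕ} (D : ThreeDMFlat n)

lemma mem_elem14 (j : Fin (3 * n)) (ℓ : Fin 4) : D.Mem (elem14 D j ℓ) j := by
  fin_cases ℓ <;> simp [elem14, Mem]

lemma elem14_three (j : Fin (3 * n)) : elem14 D j 3 = elem14 D j 2 := rfl

lemma elem14_inj {j : Fin (3 * n)} {ℓ ℓ' : Fin 4} (hℓ : ℓ ≠ 3) (hℓ' : ℓ' ≠ 3)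
    (h : elem14 D j ℓ = elem14 D j ℓ') : ℓ = ℓ' := by
  have := D.partA j
  have := D.partB j
  have := D.partC j
  fin_cases ℓ <;> fin_cases ℓ' <;> simp_all [elem14, Fin.ext_iff] <;> omega

lemma exists_elem14_eq {i j : Fin (3 * n)} (h : D.Mem i j) : ∃ ℓ ≠ 3, elem14 D j ℓ = i := by
  rcases h with h | h | h
  exacts [⟨0, by decide, h⟩, ⟨1, by decide, h⟩, ⟨2, by decide, h⟩]

lemma card_filter_mem_set (j : Fin (3 * n)) : (univ.filter fun i => D.Mem i j).card = 3 := by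
  have himage : (univ.filter fun i => D.Mem i j) =
      (univ.filter fun ℓ : Fin 4 => ℓ ≠ 3).image (elem14 D j) := by
    ext i
    simp only [mem_filter, mem_univ, true_and, mem_image]
    exact ⟨D.exists_elem14_eq, fun ⟨ℓ, _, h⟩ => h ▸ D.mem_elem14 j ℓ⟩
  rw [himage, card_image_of_injOn fun ℓ hℓ ℓ' hℓ' => D.elem14_inj (by simpa using hℓ)
    (by simpa using hℓ')]
  rfl

lemma sum_card_filter_mem (J : Finset (Fin (3 * n))) :
    ∑ i, (J.filter fun j => D.Mem i j).card = 3 * J.card := by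
  simp_rw [card_filter]
  rw [sum_comm]
  simp_rw [← card_filter, D.card_filter_mem_set, sum_const, smul_eq_mul, mul_comm]

lemma ExactCover.card_eq {J : Finset (Fin (3 * n))} (hJ : D.ExactCover J) : J.card = n := by
  have h := D.sum_card_filter_mem J
  rw [sum_congr rfl fun i _ => hJ i] at h
  simp only [sum_const, card_univ, Fintype.card_fin, smul_eq_mul, mul_one] at h
  omega

lemma exactCover_of_card_filter_mem_le_one {J : Finset (Fin (3 * n))}
    (hle : ∀ i, (J.filter fun j => D.Mem i j).card ≤ 1) (hJ : n ≤ J.card) :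
    D.ExactCover J := by
  have hsum : ∑ i, (J.filter fun j => D.Mem i j).card = ∑ _i : Fin (3 * n), 1 := by
    refine le_antisymm (sum_le_sum fun i _ => hle i) ?_
    simp only [D.sum_card_filter_mem, sum_const, card_univ, Fintype.card_fin, smul_eq_mul,
      mul_one]
    omega
  exact fun i => (sum_eq_sum_iff_of_le fun i _ => hle i).1 hsum i (mem_univ i)

end ThreeDMFlat

section Instance

variable {n : ℕ} (D : ThreeDMFlat n) (c : House14 n → ℕ)

-- `aS j ℓ` is `s_j^{ℓ+1}` and `aQ j k` is `q_j^{k+1}`.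
abbrev aE (i : Fin (3 * n)) : Appl14 n := Sum.inl i
abbrev aS (j : Fin (3 * n)) (ℓ : Fin 4) : Appl14 n := Sum.inr (Sum.inl (j, ℓ))
abbrev aA (j : Fin (3 * n)) : Appl14 n := Sum.inr (Sum.inr (Sum.inl j))
abbrev aP (j : Fin (3 * n)) : Appl14 n := Sum.inr (Sum.inr (Sum.inr (Sum.inl j)))
abbrev aQ (j : Fin (3 * n)) (k : Fin 2) : Appl14 n :=
  Sum.inr (Sum.inr (Sum.inr (Sum.inr (j, k))))

lemma House14.forall_iff {P : House14 n → Prop} :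
    (∀ h, P h) ↔ (∀ i, P (he14 i)) ∧ (∀ j, P (ht14 j)) ∧ (∀ j, P (hp14 j)) ∧
      (∀ j, P (hq14 j)) ∧ P hx14 := by
  refine ⟨fun h => ⟨fun i => h _, fun j => h _, fun j => h _, fun j => h _, h _⟩, ?_⟩
  rintro ⟨he, ht, hp, hq, hx⟩ (i | j | j | j | ⟨⟩)
  exacts [he i, ht j, hp j, hq j, hx]

@[simp] lemma pref_aE (i : Fin (3 * n)) : (inst14 D c).pref (aE i) = [he14 i] := rfl
@[simp] lemma pref_aS (j : Fin (3 * n)) (ℓ : Fin 4) :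
    (inst14 D c).pref (aS j ℓ) = [he14 (elem14 D j ℓ), hp14 j, ht14 j] := rfl
@[simp] lemma pref_aA (j : Fin (3 * n)) :
    (inst14 D c).pref (aA j) = [hq14 j, hp14 j, hx14] := rfl
@[simp] lemma pref_aP (j : Fin (3 * n)) : (inst14 D c).pref (aP j) = [hp14 j] := rfl
@[simp] lemma pref_aQ (j : Fin (3 * n)) (k : Fin 2) :
    (inst14 D c).pref (aQ j k) = [hq14 j] := rfl
@[simp] lemma cap_inst14 : (inst14 D c).cap = c := rfl

lemma three_le_card_admirers_he (i : Fin (3 * n)) :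
    3 ≤ ((inst14 D c).admirers (he14 i)).card := by
  have hpos : ∀ j, D.Mem i j → ∃ ℓ, elem14 D j ℓ = i := fun j h =>
    (D.exists_elem14_eq h).imp fun _ => And.right
  choose! ℓ hℓ using hpos
  calc 3 = (univ.filter fun j => D.Mem i j).card := by convert (D.reg i).symm; rfl
    _ ≤ ((inst14 D c).admirers (he14 i)).card :=
      card_le_card_of_injOn (fun j => aS j (ℓ j))
        (fun j hj => by simp [HA.fOpt, hℓ j (mem_filter.1 hj).2])
        (fun j _ j' _ h => (by simpa using h : j = j' ∧ _).1)

lemma admirers_hp (j : Fin (3 * n)) : (inst14 D c).admirers (hp14 j) = {aP j} := by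
  ext a
  rcases a with i | ⟨j', ℓ⟩ | j' | j' | ⟨j', k⟩ <;>
    simp [HA.fOpt, he14, hp14, hq14, eq_comm]

lemma admirers_hq (j : Fin (3 * n)) :
    (inst14 D c).admirers (hq14 j) = {aA j, aQ j 0, aQ j 1} := by
  ext a
  rcases a with i | ⟨j', ℓ⟩ | j' | j' | ⟨j', k⟩ <;> (try fin_cases k) <;>
    simp [HA.fOpt, he14, hp14, hq14]

lemma admirers_ht (j : Fin (3 * n)) : (inst14 D c).admirers (ht14 j) = ∅ := by
  ext a
  rcases a with i | ⟨j', ℓ⟩ | j' | j' | ⟨j', k⟩ <;> simp [HA.fOpt, he14, hp14, hq14, ht14]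

lemma admirers_hx : (inst14 D c).admirers (hx14 : House14 n) = ∅ := by
  ext a
  rcases a with i | ⟨j', ℓ⟩ | j' | j' | ⟨j', k⟩ <;> simp [HA.fOpt, he14, hp14, hq14, hx14]

end Instance

section Forward

variable {n : ℕ} {D : ThreeDMFlat n} {c : House14 n → ℕ} {M : Appl14 n → Option (House14 n)}

namespace HA.IsMatching

variable (hM : (inst14 D c).IsMatching M) (hperf : HA.Perfect M)
include hM hperf

lemma aE_eq (i : Fin (3 * n)) : M (aE i) = some (he14 i) :=
  hM.eq_of_pref_eq_singleton hperf rfl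

lemma aP_eq (j : Fin (3 * n)) : M (aP j) = some (hp14 j) :=
  hM.eq_of_pref_eq_singleton hperf rfl

lemma aQ_eq (j : Fin (3 * n)) (k : Fin 2) : M (aQ j k) = some (hq14 j) :=
  hM.eq_of_pref_eq_singleton hperf rfl

lemma aS_eq_he_or_hp_or_ht (j : Fin (3 * n)) (ℓ : Fin 4) :
    M (aS j ℓ) = some (he14 (elem14 D j ℓ)) ∨ M (aS j ℓ) = some (hp14 j) ∨
      M (aS j ℓ) = some (ht14 j) := by
  obtain ⟨h, hh, e⟩ := hM.exists_mem_pref hperf (aS j ℓ)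
  simp only [pref_aS, List.mem_cons, List.not_mem_nil, or_false] at hh
  rcases hh with rfl | rfl | rfl <;> simp [e]

lemma aA_eq_hp_or_hx {j : Fin (3 * n)} (hcq : c (hq14 j) ≤ 2) :
    M (aA j) = some (hp14 j) ∨ M (aA j) = some hx14 := by
  obtain ⟨h, hh, e⟩ := hM.exists_mem_pref hperf (aA j)
  simp only [pref_aA, List.mem_cons, List.not_mem_nil, or_false] at hh
  rcases hh with rfl | rfl | rfl
  · have := hM.card_le_cap (h := hq14 j) (s := {aA j, aQ j 0, aQ j 1}) (by
      simp [e, hM.aQ_eq hperf])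
    rw [card_insert_of_notMem (by simp), card_pair (by simp)] at this
    simp only [cap_inst14] at this
    omega
  · exact .inl e
  · exact .inr e

/-- `e_i'` takes one of the two places of `e_i`. -/
lemma aS_eq_aS_of_he {i j j' : Fin (3 * n)} {ℓ ℓ' : Fin 4} (hce : c (he14 i) ≤ 2)
    (h : M (aS j ℓ) = some (he14 i)) (h' : M (aS j' ℓ') = some (he14 i)) :
    aS j ℓ = aS j' ℓ' := by
  by_contra hne
  have := hM.card_le_cap (h := he14 i) (s := {aE i, aS j ℓ, aS j' ℓ'}) (by
    simp [h, h', hM.aE_eq hperf])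
  rw [card_insert_of_notMem (by simp), card_pair hne] at this
  simp only [cap_inst14] at this
  omega

lemma eq_of_aS_eq_hp {j : Fin (3 * n)} {ℓ ℓ' : Fin 4} (hcp : c (hp14 j) ≤ 3)
    (hA : M (aA j) = some (hp14 j)) (h : M (aS j ℓ) = some (hp14 j))
    (h' : M (aS j ℓ') = some (hp14 j)) : ℓ = ℓ' := by
  by_contra hne
  have := hM.card_le_cap (h := hp14 j) (s := {aP j, aA j, aS j ℓ, aS j ℓ'}) (by
    simp [h, h', hA, hM.aP_eq hperf])
  rw [card_insert_of_notMem (by simp), card_insert_of_notMem (by simp),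
    card_pair (by simpa using hne)] at this
  simp only [cap_inst14] at this
  omega

end HA.IsMatching

namespace HA.Popular

variable (hpop : (inst14 D c).Popular M) (hperf : HA.Perfect M)
include hpop hperf

/-- If `a_j` holds `p_j` while `s_j^ℓ` holds `t_j`, then moving `a_j` up to `q_j`, `s_j^ℓ` up to
`p_j` and leaving `q_j^1` unmatched makes two applicants better off and one worse off. -/
lemma aS_ne_ht {j : Fin (3 * n)} {ℓ : Fin 4} (hA : M (aA j) = some (hp14 j)) :
    M (aS j ℓ) ≠ some (ht14 j) := by
  intro hS
  have hM := hpop.1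
  set σ := (Equiv.swap (aS j ℓ) (aQ j 0)).trans (Equiv.swap (aA j) (aQ j 0))
  set M' : Appl14 n → Option (House14 n) := fun b => if b = aQ j 0 then none else M (σ b)
  have hM'A : M' (aA j) = some (hq14 j) := by
    have hσ : σ (aA j) = aQ j 0 := by
      rw [Equiv.trans_apply, Equiv.swap_apply_of_ne_of_ne (x := aA j) (by simp) (by simp),
        Equiv.swap_apply_left]
    simp [M', hσ, hM.aQ_eq hperf]
  have hM'S : M' (aS j ℓ) = some (hp14 j) := by simp [M', σ, hA]
  have hM'Q : M' (aQ j 0) = none := by simp [M']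
  have hM'eq : ∀ b, b ≠ aA j → b ≠ aS j ℓ → b ≠ aQ j 0 → M' b = M b := by
    intro b hbA hbS hbQ
    simp [M', σ, hbQ, Equiv.swap_apply_of_ne_of_ne hbS hbQ, Equiv.swap_apply_of_ne_of_ne hbA hbQ]
  have hM' : (inst14 D c).IsMatching M' := by
    refine hM.of_injective σ.injective fun b h hb =>
      ⟨?_, by simp only [M'] at hb; split_ifs at hb; exact hb⟩
    by_cases hbA : b = aA j
    · subst hbA; simp_all [hq14]
    by_cases hbS : b = aS j ℓ
    · subst hbS; simp_all [hp14]
    by_cases hbQ : b = aQ j 0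
    · simp_all
    · exact hM.1 b h (hM'eq b hbA hbS hbQ ▸ hb)
  have hbetterA : Better ((inst14 D c).pref (aA j)) (M' (aA j)) (M (aA j)) := by
    rw [hM'A, hA, pref_aA]
    exact Better.cons_self (by simp) (by simp [hp14, hq14])
  have hbetterS : Better ((inst14 D c).pref (aS j ℓ)) (M' (aS j ℓ)) (M (aS j ℓ)) := by
    rw [hM'S, hS, pref_aS]
    exact Better.cons (by simp [he14, hp14]) (by simp [he14, ht14])
      (Better.cons_self (by simp) (by simp [hp14, ht14]))
  have hworse : (univ.filter fun b => Better ((inst14 D c).pref b) (M b) (M' b)) ⊆ {aQ j 0} := by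
    intro b hb
    rw [mem_filter] at hb
    rw [mem_singleton]
    by_contra hbQ
    by_cases hbA : b = aA j
    · exact hbetterA.asymm (hbA ▸ hb.2)
    by_cases hbS : b = aS j ℓ
    · exact hbetterS.asymm (hbS ▸ hb.2)
    exact Better.irrefl _ _ (hM'eq b hbA hbS hbQ ▸ hb.2)
  have hbetter : ({aA j, aS j ℓ} : Finset (Appl14 n)) ⊆
      univ.filter fun b => Better ((inst14 D c).pref b) (M' b) (M b) := by
    simp only [insert_subset_iff, singleton_subset_iff, mem_filter, mem_univ, true_and]
    exact ⟨hbetterA, hbetterS⟩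
  refine hpop.2 M' hM' ?_
  calc _ ≤ ({aQ j 0} : Finset (Appl14 n)).card := card_le_card hworse
    _ < ({aA j, aS j ℓ} : Finset (Appl14 n)).card := by
      rw [card_singleton, card_pair (by simp)]
      decide
    _ ≤ _ := card_le_card hbetter

/-- If `a_j` holds `p_j`, only one `s_j^ℓ` fits into `p_j`, so the other three occupy the
element houses of `S_j`; since `s_j^3` and `s_j^4` cannot share `e_{j_3}`, each element of `S_j`
gets one of them. -/
lemma exists_aS_eq_he (hce : ∀ i, c (he14 i) ≤ 2) {j : Fin (3 * n)} (hcp : c (hp14 j) ≤ 3)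
    (hA : M (aA j) = some (hp14 j)) {i : Fin (3 * n)} (hi : D.Mem i j) :
    ∃ ℓ, M (aS j ℓ) = some (he14 i) := by
  have hM := hpop.1
  have hS : ∀ ℓ, M (aS j ℓ) = some (he14 (elem14 D j ℓ)) ∨ M (aS j ℓ) = some (hp14 j) :=
    fun ℓ => (hM.aS_eq_he_or_hp_or_ht hperf j ℓ).imp_right
      (·.resolve_right (hpop.aS_ne_ht hperf hA))
  obtain ⟨ℓ₀, hℓ₀, rfl⟩ := D.exists_elem14_eq hi
  by_contra! hnone
  have hP₀ : M (aS j ℓ₀) = some (hp14 j) := (hS ℓ₀).resolve_left (hnone ℓ₀)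
  have hE : ∀ ℓ ≠ ℓ₀, M (aS j ℓ) = some (he14 (elem14 D j ℓ)) := fun ℓ hℓ =>
    (hS ℓ).resolve_right fun h => hℓ (hM.eq_of_aS_eq_hp hperf hcp hA h hP₀)
  by_cases h2 : ℓ₀ = 2
  · subst h2
    exact hnone 3 (hE 3 (by decide))
  · have h23 := hM.aS_eq_aS_of_he hperf (hce _) (hE 2 (Ne.symm h2))
      (D.elem14_three j ▸ hE 3 (Ne.symm hℓ₀))
    simp at h23

theorem exactCover (hc : ∀ h, c h ≤ cap14 h + 1) :
    D.ExactCover (univ.filter fun j => M (aA j) = some (hp14 j)) := by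
  set J := univ.filter fun j => M (aA j) = some (hp14 j)
  have hM := hpop.1
  refine D.exactCover_of_card_filter_mem_le_one (fun i => card_le_one.2 fun j hj j' hj' => ?_) ?_
  · simp only [J, mem_filter, mem_univ, true_and] at hj hj'
    have hce : ∀ i, c (he14 i) ≤ 2 := fun i => hc (he14 i)
    obtain ⟨ℓ, hℓ⟩ := hpop.exists_aS_eq_he hperf hce (hc (hp14 j)) hj.1 hj.2
    obtain ⟨ℓ', hℓ'⟩ := hpop.exists_aS_eq_he hperf hce (hc (hp14 j')) hj'.1 hj'.2
    exact (by simpa using hM.aS_eq_aS_of_he hperf (hce i) hℓ hℓ' : j = j' ∧ ℓ = ℓ').1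
  · have hx := hM.card_le_cap (h := hx14) (s := Jᶜ.image aA) fun a ha => by
      obtain ⟨j, hj, rfl⟩ := mem_image.1 ha
      exact (hM.aA_eq_hp_or_hx hperf (hc (hq14 j))).resolve_left (by simpa [J] using hj)
    have hcx := hc hx14
    rw [card_image_of_injective _ fun _ _ => by simp, card_compl, Fintype.card_fin] at hx
    simp only [cap_inst14, cap14, hx14] at hx hcx
    have := card_le_univ J
    simp only [Fintype.card_fin] at this
    omega

end HA.Popular

end Forward

section Backward

variable {n : ℕ} (D : ThreeDMFlat n) (J : Finset (Fin (3 * n)))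

def coverChange : House14 n → ℤ
  | Sum.inl _ => 1
  | Sum.inr (Sum.inl _) => 0
  | Sum.inr (Sum.inr (Sum.inl j)) => if j ∈ J then 1 else -1
  | Sum.inr (Sum.inr (Sum.inr (Sum.inl _))) => 1
  | Sum.inr (Sum.inr (Sum.inr (Sum.inr _))) => 1

def coverCap (h : House14 n) : ℕ := ((cap14 h : ℤ) + coverChange J h).toNat

def coverMatching : Appl14 n → Option (House14 n)
  | Sum.inl i => some (he14 i)
  | Sum.inr (Sum.inl (j, ℓ)) =>
      if j ∈ J then (if ℓ = 3 then some (hp14 j) else some (he14 (elem14 D j ℓ)))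
      else some (ht14 j)
  | Sum.inr (Sum.inr (Sum.inl j)) => if j ∈ J then some (hp14 j) else some hx14
  | Sum.inr (Sum.inr (Sum.inr (Sum.inl j))) => some (hp14 j)
  | Sum.inr (Sum.inr (Sum.inr (Sum.inr (j, _)))) => some (hq14 j)

lemma coverChange_nonneg (h : House14 n) : 0 ≤ (cap14 h : ℤ) + coverChange J h := by
  rcases h with i | j | j | j | u <;> simp only [cap14, coverChange] <;> (try split_ifs) <;> omega

lemma abs_coverChange_le (h : House14 n) : |coverChange J h| ≤ 1 := by
  rcases h with i | j | j | j | u <;> simp only [coverChange] <;> (try split_ifs) <;> simp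

@[simp] lemma coverCap_he (i : Fin (3 * n)) : coverCap J (he14 i) = 2 := rfl
@[simp] lemma coverCap_ht (j : Fin (3 * n)) : coverCap J (ht14 j) = 4 := rfl
@[simp] lemma coverCap_hp (j : Fin (3 * n)) : coverCap J (hp14 j) = if j ∈ J then 3 else 1 := by
  by_cases h : j ∈ J <;> simp [coverCap, coverChange, cap14, hp14, h]
@[simp] lemma coverCap_hq (j : Fin (3 * n)) : coverCap J (hq14 j) = 2 := rfl
@[simp] lemma coverCap_hx : coverCap J (hx14 : House14 n) = 2 * n - 1 + 1 := by
  simp only [coverCap, coverChange, cap14, hx14]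
  omega

lemma matchedTo_hq (j : Fin (3 * n)) :
    HA.matchedTo (coverMatching D J) (hq14 j) = {aQ j 0, aQ j 1} := by
  ext a
  rcases a with i | ⟨j', ℓ⟩ | j' | j' | ⟨j', k⟩ <;> (try fin_cases k) <;>
    simp [coverMatching, he14, hp14, hq14, ht14, hx14] <;> split_ifs <;> simp [eq_comm]

lemma matchedTo_hp (j : Fin (3 * n)) : HA.matchedTo (coverMatching D J) (hp14 j) =
    if j ∈ J then {aP j, aA j, aS j 3} else {aP j} := by
  ext a
  rcases a with i | ⟨j', ℓ⟩ | j' | j' | ⟨j', k⟩ <;>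
    simp [coverMatching, he14, hp14, hq14, ht14, hx14] <;> split_ifs <;> aesop

lemma matchedTo_ht (j : Fin (3 * n)) :
    HA.matchedTo (coverMatching D J) (ht14 j) ⊆ univ.image (aS j) := by
  intro a
  rcases a with i | ⟨j', ℓ⟩ | j' | j' | ⟨j', k⟩ <;>
    simp [coverMatching, he14, hp14, hq14, ht14, hx14] <;> split_ifs <;> simp_all [eq_comm]

lemma matchedTo_hx :
    HA.matchedTo (coverMatching D J) hx14 = Jᶜ.image aA := by
  ext a
  rcases a with i | ⟨j', ℓ⟩ | j' | j' | ⟨j', k⟩ <;>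
    simp [coverMatching, he14, hp14, hq14, ht14, hx14]
  split_ifs <;> simp_all

lemma coverMatching_eq_he {a : Appl14 n} {i : Fin (3 * n)} :
    coverMatching D J a = some (he14 i) ↔
      a = aE i ∨ ∃ j ∈ J, ∃ ℓ ≠ 3, elem14 D j ℓ = i ∧ a = aS j ℓ := by
  rcases a with i' | ⟨j', ℓ⟩ | j' | j' | ⟨j', k⟩ <;>
    simp [coverMatching, he14, hp14, hq14, ht14, hx14] <;> split_ifs <;> simp_all [eq_comm]

lemma sOpt_aS (j : Fin (3 * n)) (ℓ : Fin 4) : (inst14 D (coverCap J)).sOpt (aS j ℓ) =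
    some (if j ∈ J then hp14 j else ht14 j) := by
  have h3 := three_le_card_admirers_he D (coverCap J) (elem14 D j ℓ)
  have h2 : ¬ ((inst14 D (coverCap J)).admirers (he14 (elem14 D j ℓ))).card ≤ 2 := by omega
  have h1 : ¬ ((inst14 D (coverCap J)).admirers (he14 (elem14 D j ℓ))).card ≤ 1 := by omega
  by_cases hj : j ∈ J <;> simp [HA.sOpt, admirers_hp, admirers_ht, h1, h2, hj]

lemma sOpt_aA (j : Fin (3 * n)) : (inst14 D (coverCap J)).sOpt (aA j) =
    some (if j ∈ J then hp14 j else hx14) := by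
  by_cases hj : j ∈ J <;> simp [HA.sOpt, admirers_hp, admirers_hq, admirers_hx, hj]

variable {D J}

lemma ThreeDMFlat.ExactCover.matchedTo_he (hJ : D.ExactCover J) (i : Fin (3 * n)) :
    ∃ j ℓ, elem14 D j ℓ = i ∧
      HA.matchedTo (coverMatching D J) (he14 i) = {aE i, aS j ℓ} := by
  obtain ⟨j₀, hj₀⟩ := card_eq_one.1 (hJ i)
  have hmem : ∀ j, j ∈ J ∧ D.Mem i j ↔ j = j₀ := fun j => by
    simpa using congrArg (j ∈ ·) hj₀
  obtain ⟨ℓ₀, hℓ₀, rfl⟩ := D.exists_elem14_eq ((hmem j₀).2 rfl).2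
  refine ⟨j₀, ℓ₀, rfl, ext fun a => ?_⟩
  rw [HA.mem_matchedTo, coverMatching_eq_he, mem_insert, mem_singleton]
  refine or_congr_right
    ⟨?_, fun h => ⟨j₀, ((hmem j₀).2 rfl).1, ℓ₀, hℓ₀, rfl, h⟩⟩
  rintro ⟨j, hj, ℓ, hℓ, he, rfl⟩
  obtain rfl := (hmem j).1 ⟨hj, he ▸ D.mem_elem14 j ℓ⟩
  rw [D.elem14_inj hℓ hℓ₀ he]

lemma coverMatching_perfect : HA.Perfect (coverMatching D J) := by
  rintro (i | ⟨j, ℓ⟩ | j | j | ⟨j, k⟩) <;> simp only [coverMatching] <;>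
    (try split_ifs) <;> rfl

lemma ThreeDMFlat.ExactCover.isMatching_coverMatching (hJ : D.ExactCover J) :
    (inst14 D (coverCap J)).IsMatching (coverMatching D J) := by
  refine ⟨fun a h ha => ?_, fun h => ?_⟩
  · rcases a with i | ⟨j, ℓ⟩ | j | j | ⟨j, k⟩ <;> simp only [coverMatching] at ha <;>
      (try split_ifs at ha) <;> simp_all
  · change (HA.matchedTo _ h).card ≤ coverCap J h
    revert h
    refine House14.forall_iff.2 ⟨fun i => ?_, fun j => ?_, fun j => ?_, fun j => ?_, ?_⟩
    · obtain ⟨j, ℓ, -, h⟩ := hJ.matchedTo_he i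
      rw [h]
      exact card_le_two
    · exact (card_le_card (matchedTo_ht D J j)).trans (card_image_le.trans (by simp))
    · rw [matchedTo_hp]
      split_ifs with hj <;> simp [hj]
    · rw [matchedTo_hq]
      exact card_le_two
    · rw [matchedTo_hx, card_image_of_injective _ fun _ _ => by simp, card_compl, hJ.card_eq]
      simp only [Fintype.card_fin]
      exact le_of_eq_of_le rfl (by simp; omega)

lemma coverMatching_eq_fOpt_or_sOpt (a : Appl14 n) :
    coverMatching D J a = (inst14 D (coverCap J)).fOpt a ∨
      coverMatching D J a = (inst14 D (coverCap J)).sOpt a := by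
  rcases a with i | ⟨j, ℓ⟩ | j | j | ⟨j, k⟩
  · exact .inl rfl
  · rw [sOpt_aS]
    by_cases hj : j ∈ J <;> by_cases hℓ : ℓ = 3 <;> simp [coverMatching, HA.fOpt, hj, hℓ]
  · rw [sOpt_aA]
    by_cases hj : j ∈ J <;> simp [coverMatching, hj]
  · exact .inl rfl
  · exact .inl rfl

lemma ThreeDMFlat.ExactCover.popular_coverMatching (hJ : D.ExactCover J) :
    (inst14 D (coverCap J)).Popular (coverMatching D J) := by
  refine HA.popular_of_fOpt_or_sOpt hJ.isMatching_coverMatching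
    coverMatching_eq_fOpt_or_sOpt (House14.forall_iff.2 ⟨fun i _ => ?_, fun j hh => ?_,
      fun j hh => ?_, fun j _ => ?_, fun hh => ?_⟩)
  · obtain ⟨j, ℓ, hℓ, h⟩ := hJ.matchedTo_he i
    simp [h, HA.fOpt, hℓ]
  · simp [admirers_ht] at hh
  · by_cases hj : j ∈ J
    · simp [admirers_hp, hj] at hh
    · simp [matchedTo_hp, hj, HA.fOpt]
  · simp [matchedTo_hq, HA.fOpt]
  · simp [admirers_hx] at hh

end Backward

/-- there is a capacity change vector `r` with `|r|_∞ ≤ 1` such that the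
instance with capacities `q + r` admits a perfect popular matching iff the 3DM instance
admits an exact 3-cover. -/
theorem minMax_change_iff_exactCover (n : ℕ) (D : ThreeDMFlat n) :
    (∃ r : House14 n → ℤ, (∀ h, 0 ≤ (cap14 h : ℤ) + r h) ∧ (∀ h, |r h| ≤ 1) ∧
        ∃ M, HA.Perfect M ∧
          (inst14 D fun h => ((cap14 h : ℤ) + r h).toNat).Popular M) ↔
      (∃ J, D.ExactCover J) := by
  constructor
  · rintro ⟨r, -, hr, M, hperf, hpop⟩
    exact ⟨_, hpop.exactCover hperf fun h => by have := (abs_le.1 (hr h)).2; omega⟩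
  · rintro ⟨J, hJ⟩
    exact ⟨coverChange J, coverChange_nonneg J, abs_coverChange_le J, coverMatching D J,
      coverMatching_perfect, hJ.popular_coverMatching⟩
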